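/- Let (R,m) be a one-dimensional Noetherian reduced local ring with finitely generated integral closure S, and let x be a minimal reduction of m. Then xS = mS. In particular mS is a principal ideal of S. -/

import Mathlib

/-!
Since `m ^ (n + 1) ⊆ xR` and `m` is not a minimal prime (dimension one), `x` avoids every
minimal prime, so in the reduced ring `R` it is a nonzerodivisor and `x` is invertible in the
total ring of fractions. For `y ∈ m`, the fraction `y / x` maps the finitely generated `R`-module
`m ^ n` into itself, because `y m ^ n ⊆ m ^ (n + 1) = x m ^ n`; as `m ^ n` contains the unit
`x ^ n`, this forces `y / x` to be integral over `R`, hence to lie in `S`, so `y ∈ xS`.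
-/

open IsLocalRing

open scoped nonZeroDivisors

theorem mem_nonZeroDivisors_of_forall_notMem_minimalPrimes {R : Type*} [CommRing R] [IsReduced R]
    {x : R} (hx : ∀ p ∈ minimalPrimes R, x ∉ p) : x ∈ R⁰ := by
  refine mem_nonZeroDivisors_iff_right.mpr fun r hr ↦ ?_
  have hr_mem : r ∈ sInf (minimalPrimes R) := Submodule.mem_sInf.mpr fun p hp ↦
    ((hp.1.1.mem_or_mem (hr ▸ p.zero_mem)).resolve_right (hx p hp))
  rw [minimalPrimes, Ideal.sInf_minimalPrimes] at hr_mem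
  exact (nilradical_eq_zero R).le hr_mem

namespace IsLocalRing

variable {R : Type*} [CommRing R] [IsLocalRing R]

theorem maximalIdeal_notMem_minimalPrimes (hdim : ringKrullDim R ≠ 0) :
    maximalIdeal R ∉ minimalPrimes R := fun hmin ↦ hdim <| by
  rw [← maximalIdeal_height_eq_ringKrullDim, Ideal.height_eq_zero_iff.mpr hmin]
  rfl

theorem mem_nonZeroDivisors_of_maximalIdeal_pow_le_span [IsReduced R] (hdim : ringKrullDim R ≠ 0)
    {x : R} {k : ℕ} (hk : maximalIdeal R ^ k ≤ Ideal.span {x}) : x ∈ R⁰ := by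
  refine mem_nonZeroDivisors_of_forall_notMem_minimalPrimes fun p hp hxp ↦ ?_
  have hmp : maximalIdeal R ≤ p :=
    hp.1.1.le_of_pow_le (hk.trans ((Ideal.span_singleton_le_iff_mem p).mpr hxp))
  rw [← le_antisymm hmp (le_maximalIdeal hp.1.1.ne_top)] at hp
  exact maximalIdeal_notMem_minimalPrimes hdim hp

end IsLocalRing

theorem isIntegral_of_mul_mem_of_isUnit {R K : Type*} [CommRing R] [IsNoetherianRing R] [CommRing K]
    [Algebra R K] {N : Submodule R K} (hN : N.FG) {u : K} (hu : IsUnit u) (huN : u ∈ N) {t : K}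
    (ht : ∀ a ∈ N, t * a ∈ N) : IsIntegral R t := by
  have hstab : ∀ s ∈ Algebra.adjoin R {t}, ∀ a ∈ N, s * a ∈ N := by
    intro s hs
    induction hs using Algebra.adjoin_induction with
    | mem s hs => rw [Set.mem_singleton_iff.mp hs]; exact ht
    | algebraMap r => intro a ha; rw [← Algebra.smul_def]; exact N.smul_mem r ha
    | add s s' _ _ hs hs' => intro a ha; rw [add_mul]; exact N.add_mem (hs a ha) (hs' a ha)
    | mul s s' _ _ hs hs' => intro a ha; rw [mul_assoc]; exact hs _ (hs' a ha)
  -- multiplication by the unit `u` embeds `R[t]` into the Noetherian module `N`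
  have hmap :
      (Subalgebra.toSubmodule (Algebra.adjoin R {t})).map (LinearMap.mulRight R u) ≤ N := by
    rintro _ ⟨s, hs, rfl⟩
    exact hstab s hs u huN
  have hfg : (Subalgebra.toSubmodule (Algebra.adjoin R {t})).FG :=
    Submodule.fg_of_fg_map_injective _ (fun _ _ h ↦ hu.mul_right_cancel h) (hN.of_le hmap)
  exact IsIntegral.of_mem_of_fg _ hfg t (Algebra.self_mem_adjoin_singleton R t)

section Reduction

variable {R : Type*} [CommRing R] [IsNoetherianRing R] {I : Ideal R} {x : R} {n : ℕ}

theorem isIntegral_of_mul_eq_of_reduction {K : Type*} [CommRing K] [Algebra R K]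
    (hx : x ∈ I) (hI : I ^ (n + 1) = Ideal.span {x} * I ^ n) (hxu : IsUnit (algebraMap R K x))
    {y : R} (hy : y ∈ I) {t : K} (ht : algebraMap R K x * t = algebraMap R K y) :
    IsIntegral R t := by
  refine isIntegral_of_mul_mem_of_isUnit (N := Submodule.map (Algebra.linearMap R K) (I ^ n))
    (Submodule.FG.map _ (I ^ n).fg_of_isNoetherianRing) (hxu.pow n)
    (map_pow (algebraMap R K) x n ▸ Submodule.mem_map_of_mem (Ideal.pow_mem_pow hx n)) ?_
  rintro _ ⟨z, hz, rfl⟩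
  obtain ⟨w, hw, hyz⟩ : ∃ w ∈ I ^ n, x * w = y * z :=
    Ideal.mem_span_singleton_mul.mp (hI ▸ pow_succ' I n ▸ Ideal.mul_mem_mul hy hz)
  refine ⟨w, hw, hxu.mul_left_cancel ?_⟩
  simp only [Algebra.linearMap_apply, ← mul_assoc, ht, ← map_mul, hyz]

theorem Ideal.map_eq_span_singleton_of_reduction (S K : Type*) [CommRing S] [CommRing K]
    [Algebra R S] [Algebra R K] [Algebra S K] [IsScalarTower R S K] [IsIntegralClosure S R K]
    (hx : x ∈ I) (hI : I ^ (n + 1) = Ideal.span {x} * I ^ n) (hxu : IsUnit (algebraMap R K x)) :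
    I.map (algebraMap R S) = Ideal.span {algebraMap R S x} := by
  refine le_antisymm ((Ideal.map_le_iff_le_comap).mpr fun y hy ↦ ?_)
    ((Ideal.span_singleton_le_iff_mem _).mpr (Ideal.mem_map_of_mem _ hx))
  let t : K := ↑hxu.unit⁻¹ * algebraMap R K y
  obtain ⟨s, hs⟩ := (IsIntegralClosure.isIntegral_iff (A := S)).mp <|
    isIntegral_of_mul_eq_of_reduction hx hI hxu hy (t := t)
      (by rw [← mul_assoc, hxu.mul_val_inv, one_mul])
  refine Ideal.mem_span_singleton'.mpr ⟨s, IsIntegralClosure.algebraMap_injective S R K ?_⟩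
  rw [map_mul, hs, ← IsScalarTower.algebraMap_apply, ← IsScalarTower.algebraMap_apply, mul_comm,
    ← mul_assoc, hxu.mul_val_inv, one_mul]

end Reduction

theorem stmt3_general (R S : Type*) [CommRing R] [IsLocalRing R] [IsNoetherianRing R] [IsReduced R]
    (hdim : ringKrullDim R = 1)
    [CommRing S] [Algebra R S] [Algebra S (FractionRing R)]
    [IsScalarTower R S (FractionRing R)]
    [IsIntegralClosure S R (FractionRing R)]
    (x : R) (hx : x ∈ maximalIdeal R)
    (hred : ∃ n : ℕ, maximalIdeal R ^ (n + 1) = Ideal.span {x} * maximalIdeal R ^ n) :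
    Ideal.span {algebraMap R S x} = Ideal.map (algebraMap R S) (maximalIdeal R) ∧
    ∃ s : S, Ideal.map (algebraMap R S) (maximalIdeal R) = Ideal.span {s} := by
  obtain ⟨n, hn⟩ := hred
  have hxnz : x ∈ R⁰ := mem_nonZeroDivisors_of_maximalIdeal_pow_le_span (by simp [hdim])
    (hn.trans_le Ideal.mul_le_left)
  have hmS := Ideal.map_eq_span_singleton_of_reduction S (FractionRing R) hx hn
    (IsLocalization.map_units _ ⟨x, hxnz⟩)
  exact ⟨hmS.symm, _, hmS⟩

/-- Let `(R, m)` be a one-dimensional Noetherian reduced local ring whose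
integral closure `S` (in the total ring of fractions `FractionRing R`) is finitely generated
as an `R`-module, and let `x ∈ m` be a minimal reduction of `m` (i.e. `m^(n+1) = x m^n` for
some `n`).  Then `xS = mS`; in particular `mS` is a principal ideal of `S`. -/
theorem stmt3 (R S : Type*) [CommRing R] [IsLocalRing R] [IsNoetherianRing R] [IsReduced R]
    (hdim : ringKrullDim R = 1)
    [CommRing S] [Algebra R S] [Algebra S (FractionRing R)]
    [IsScalarTower R S (FractionRing R)]
    [IsIntegralClosure S R (FractionRing R)]
    [Module.Finite R S]
    (x : R) (hx : x ∈ maximalIdeal R)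
    (hred : ∃ n : ℕ, maximalIdeal R ^ (n + 1) = Ideal.span {x} * maximalIdeal R ^ n) :
    Ideal.span {algebraMap R S x} = Ideal.map (algebraMap R S) (maximalIdeal R) ∧
    ∃ s : S, Ideal.map (algebraMap R S) (maximalIdeal R) = Ideal.span {s} :=
  stmt3_general R S hdim x hx hred
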